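/- In the braid group B_n with Artin generators σ_1,...,σ_{n-1}, the band generators a_{t,s} := (σ_{t-1} σ_{t-2} ⋯ σ_{s+1}) σ_s (σ_{s+1}^{-1} ⋯ σ_{t-2}^{-1} σ_{t-1}^{-1}) for 1 ≤ s < t ≤ n satisfy a_{t,s} a_{s,r} = a_{t,r} a_{t,s} for all 1 ≤ r < s < t ≤ n. -/

import Mathlib

/-- The braid relations on the free group with generators indexed by `Fin (n-1)`
(generator `i` corresponds to the Artin generator `σ_{i+1}`). -/
def braidRels (n : ℕ) : Set (FreeGroup (Fin (n - 1))) :=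
  {r | (∃ i j : Fin (n - 1), (i : ℕ) + 1 < (j : ℕ) ∧
        r = FreeGroup.of i * FreeGroup.of j * (FreeGroup.of i)⁻¹ * (FreeGroup.of j)⁻¹) ∨
       (∃ i j : Fin (n - 1), (i : ℕ) + 1 = (j : ℕ) ∧
        r = FreeGroup.of i * FreeGroup.of j * FreeGroup.of i *
            (FreeGroup.of j * FreeGroup.of i * FreeGroup.of j)⁻¹)}

/-- The Artin braid group `B_n`. -/
def BraidGroup (n : ℕ) : Type := PresentedGroup (braidRels n)

instance (n : ℕ) : Group (BraidGroup n) := by unfold BraidGroup; infer_instance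

/-- The Artin generator `σ_i` of `B_n`, for `1 ≤ i ≤ n - 1` (junk value `1` otherwise). -/
def braidGen {n : ℕ} (i : ℕ) : BraidGroup n :=
  if h : 1 ≤ i ∧ i < n then PresentedGroup.of (⟨i - 1, by omega⟩ : Fin (n - 1)) else 1

/-- The word `σ_{t-1} σ_{t-2} ⋯ σ_{s+1}` in `B_n`. -/
def bandWord {n : ℕ} (t s : ℕ) : BraidGroup n :=
  (((List.range (t - 1 - s)).map (fun k => braidGen (n := n) (t - 1 - k))).prod)

/-- The band generator `a_{t,s} = (σ_{t-1} ⋯ σ_{s+1}) σ_s (σ_{s+1}⁻¹ ⋯ σ_{t-1}⁻¹)`. -/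
def band {n : ℕ} (t s : ℕ) : BraidGroup n :=
  bandWord t s * braidGen s * (bandWord t s)⁻¹

/-!
With `W = σ_{t-1} ⋯ σ_{s+1}` we have `a_{t,s} = W σ_s W⁻¹`, and since the word for `a_{t,r}`
factors as `W σ_s (σ_{s-1} ⋯ σ_{r+1})`, also `a_{t,r} = (W σ_s) a_{s,r} (W σ_s)⁻¹`.
The band `a_{s,r}` is a word in `σ_r, …, σ_{s-1}`, so by the far commutation relations it
commutes with `W`; both sides of the relation then equal `W σ_s a_{s,r} W⁻¹`.
-/

lemma braidGen_eq_one {n i : ℕ} (hi : ¬(1 ≤ i ∧ i < n)) : braidGen (n := n) i = 1 :=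
  dif_neg hi

lemma braidGen_eq_of {n i : ℕ} (hi : 1 ≤ i ∧ i < n) :
    braidGen (n := n) i = PresentedGroup.of (⟨i - 1, by omega⟩ : Fin (n - 1)) :=
  dif_pos hi

lemma braidGen_commute {n i j : ℕ} (h : i + 1 < j) :
    Commute (braidGen (n := n) i) (braidGen (n := n) j) := by
  by_cases hi : 1 ≤ i ∧ i < n
  · by_cases hj : 1 ≤ j ∧ j < n
    · have hrel := PresentedGroup.one_of_mem (rels := braidRels n) <| Or.inl
        ⟨⟨i - 1, by omega⟩, ⟨j - 1, by omega⟩, by simp only; omega, rfl⟩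
      simp only [map_mul, map_inv] at hrel
      rw [braidGen_eq_of hi, braidGen_eq_of hj]
      exact mul_inv_eq_iff_eq_mul.mp (mul_inv_eq_one.mp hrel)
    · exact braidGen_eq_one hj ▸ Commute.one_right _
  · exact braidGen_eq_one hi ▸ Commute.one_left _

lemma bandWord_eq_mul_braidGen_mul {n r s t : ℕ} (hrs : r < s) (hst : s < t) :
    bandWord (n := n) t r = bandWord t s * braidGen s * bandWord s r := by
  have hlen : t - 1 - r = (t - 1 - s) + ((s - 1 - r) + 1) := by omega
  have hfirst : t - 1 - (t - 1 - s + 0) = s := by omega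
  have hrest : ∀ k, t - 1 - (t - 1 - s + (k + 1)) = s - 1 - k := by omega
  rw [bandWord, hlen, List.range_add, List.map_append, List.prod_append, List.map_map,
    List.prod_range_succ', mul_assoc, bandWord, bandWord]
  simp only [Function.comp_apply, hfirst, hrest]

lemma commute_bandWord {n s t : ℕ} {a : BraidGroup n}
    (h : ∀ i, s < i → i < t → Commute a (braidGen i)) : Commute a (bandWord t s) :=
  Commute.list_prod_right _ _ <| by
    simp only [List.mem_map, List.mem_range]
    rintro _ ⟨k, hk, rfl⟩
    exact h _ (by omega) (by omega)

lemma band_commute_braidGen {n r s j : ℕ} (hrs : r < s) (hsj : s < j) :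
    Commute (band (n := n) s r) (braidGen j) := by
  have hword : Commute (braidGen j) (bandWord (n := n) s r) :=
    commute_bandWord fun i _ hi => (braidGen_commute (by omega)).symm
  have hgen : Commute (braidGen (n := n) r) (braidGen j) := braidGen_commute (by omega)
  exact (hword.symm.mul_left hgen).mul_left hword.symm.inv_left

lemma band_eq_conj_band {n r s t : ℕ} (hrs : r < s) (hst : s < t) :
    band (n := n) t r =
      (bandWord t s * braidGen s) * band s r * (bandWord t s * braidGen s)⁻¹ := by
  simp only [band, bandWord_eq_mul_braidGen_mul hrs hst]
  group

theorem stmt6_general {n : ℕ} (r s t : ℕ) (h2 : r < s) (h3 : s < t) :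
    band (n := n) t s * band s r = band t r * band t s := by
  have hcomm : Commute (band (n := n) s r) (bandWord t s) :=
    commute_bandWord fun _ hsi _ => band_commute_braidGen h2 hsi
  rw [band_eq_conj_band h2 h3, band]
  calc bandWord t s * braidGen s * (bandWord t s)⁻¹ * band s r
      = bandWord t s * braidGen s * (band s r * (bandWord t s)⁻¹) := by
        rw [mul_assoc, ← hcomm.inv_right.eq]
    _ = _ := by group

theorem stmt6 {n : ℕ} (r s t : ℕ) (h1 : 1 ≤ r) (h2 : r < s) (h3 : s < t) (h4 : t ≤ n) :
    band (n := n) t s * band s r = band t r * band t s :=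
  stmt6_general r s t h2 h3
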